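/- arXiv:1406.0363 — 3 statements merged into one kernel-verified Lean document; each statement's English description precedes it below -/
import Mathlib

section
/- Suppose Assumption (S) holds. Then the size of the range satisfies 𝔼[|R(n)|] = (n/ℓ*(n))(1+o(1)) as n → ∞, and |R(n)| obeys the weak law of large numbers: |R(n)| / 𝔼[|R(n)|] → 1 in ℙ-probability as n → ∞. -/
/-!
Count each point of the range at its last visit before time `n`: `|R(n)| = ∑_{i<n} 1[A_i]`, where
`A_i` says that the walk restarted at time `n - 1 - i` does not return to its starting point within
`i` steps. By independence and stationarity of the increments `P(A_i) = r_i`, so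
`𝔼|R(n)| = r_0 + ⋯ + r_{n-1}`, and slow variation of `1/r` makes this sum `n r_n (1 + o(1))`.
For `a < c` the events `A_a` and `A_c` lie inside non-return events over disjoint time blocks, so
`P(A_a ∩ A_c) ≤ r_a r_{c-a}`; slow variation makes the resulting covariance bound
`∑_{a<c<n} r_a (r_{c-a} - r_c)` negligible against `(𝔼|R(n)|)²`, and Chebyshev's inequality
gives the weak law.
-/

open MeasureTheory ProbabilityTheory Filter Finset Topology

namespace RandomWalkRange

lemma card_image_range_eq_card_filter {β : Type*} [DecidableEq β] (f : ℕ → β) (n : ℕ) :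
    #((range n).image f) = #{k ∈ range n | ∀ j ∈ Ioo k n, f j ≠ f k} := by
  rw [← card_image_of_injOn (f := f)]
  · refine congrArg card (Subset.antisymm (fun y hy => ?_) (image_subset_image (filter_subset _ _)))
    obtain ⟨k, hk, rfl⟩ := mem_image.1 hy
    obtain ⟨K, hK, hmax⟩ := exists_max_image {j ∈ range n | f j = f k} id ⟨k, by simpa using hk⟩
    rw [mem_filter] at hK
    refine mem_image.2 ⟨K, mem_filter.2 ⟨hK.1, fun j hj hfj => ?_⟩, hK.2⟩
    obtain ⟨hKj, hjn⟩ := mem_Ioo.1 hj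
    exact hKj.not_ge (hmax j (mem_filter.2 ⟨mem_range.2 hjn, hfj.trans hK.2⟩))
  · intro x hx y hy hxy
    simp only [coe_filter, Set.mem_ofPred_eq, mem_range] at hx hy
    by_contra hne
    rcases lt_or_gt_of_ne hne with h | h
    · exact hx.2 y (mem_Ioo.2 ⟨h, hy.1⟩) hxy.symm
    · exact hy.2 x (mem_Ioo.2 ⟨h, hx.1⟩) hxy

lemma sum_range_sum_range_eq_of_symm {M : Type*} [AddCommMonoid M] (F : ℕ → ℕ → M)
    (hF : ∀ i j, F i j = F j i) (n : ℕ) :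
    ∑ i ∈ range n, ∑ j ∈ range n, F i j
      = ∑ i ∈ range n, F i i + 2 • ∑ j ∈ range n, ∑ i ∈ range j, F i j := by
  induction n with
  | zero => simp
  | succ n ih =>
    simp only [sum_range_succ, sum_add_distrib, ih, smul_add, two_nsmul]
    rw [sum_congr rfl fun j _ => hF n j]
    abel

section SlowVariation

noncomputable def pairExcess (r : ℕ → ℝ) (n : ℕ) : ℝ :=
  ∑ c ∈ range n, ∑ a ∈ range c, r a * (r (c - a) - r c)

variable {r : ℕ → ℝ}

lemma eventually_inv_le_of_tendsto_div {ℓ : ℕ → ℝ} (hℓ : ∀ n, 0 < ℓ n) {f : ℕ → ℕ}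
    (h : Tendsto (fun n => ℓ (f n) / ℓ n) atTop (𝓝 1)) {η : ℝ} (hη : 0 < η) :
    ∀ᶠ n in atTop, (ℓ (f n))⁻¹ ≤ (1 + η) * (ℓ n)⁻¹ := by
  have hη₁ : (1 + η)⁻¹ < 1 := inv_lt_one_of_one_lt₀ (lt_add_of_pos_right 1 hη)
  filter_upwards [h.eventually (lt_mem_nhds hη₁)] with n hn
  rw [lt_div_iff₀ (hℓ n)] at hn
  calc (ℓ (f n))⁻¹ ≤ ((1 + η)⁻¹ * ℓ n)⁻¹ := inv_anti₀ (by have := hℓ n; positivity) hn.le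
    _ = (1 + η) * (ℓ n)⁻¹ := by rw [mul_inv, inv_inv]

lemma mul_le_sum_range (hanti : Antitone r) (n : ℕ) : n * r n ≤ ∑ k ∈ range n, r k := by
  simpa using card_nsmul_le_sum (range n) r (r n) fun k hk => hanti (mem_range.1 hk).le

lemma sum_range_le_add_mul (hr : ∀ n, 0 ≤ r n) (hanti : Antitone r) (m n : ℕ) :
    ∑ k ∈ range n, r k ≤ ∑ k ∈ range m, r k + n * r m := by
  rcases le_total m n with hmn | hnm
  · rw [← sum_range_add_sum_Ico _ hmn]
    have := sum_le_card_nsmul (Ico m n) r (r m) fun k hk => hanti (mem_Ico.1 hk).1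
    rw [Nat.card_Ico, nsmul_eq_mul] at this
    have : ((n - m : ℕ) : ℝ) ≤ n := by exact_mod_cast Nat.sub_le n m
    nlinarith [hr m]
  · have := sum_le_sum_of_subset_of_nonneg (range_subset_range.2 hnm) fun k _ _ => hr k
    nlinarith [hr m, (Nat.cast_nonneg n : (0 : ℝ) ≤ n)]

lemma sum_range_ite_sub_lt_le (hr : ∀ n, 0 ≤ r n) {c m : ℕ} (hmc : m ≤ c) :
    ∑ a ∈ range c, (if c - a < m then r (c - a) else 0) ≤ ∑ b ∈ range m, r b := by
  set g : ℕ → ℝ := fun b => if b < m then r b else 0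
  have hg : ∀ b, 0 ≤ g b := fun b => by simp only [g]; split_ifs; exacts [hr b, le_rfl]
  calc ∑ a ∈ range c, g (c - a) ≤ ∑ a ∈ range (c + 1), g (c + 1 - 1 - a) := by
        rw [sum_range_succ]; simpa using hg 0
    _ = ∑ b ∈ range m, g b + ∑ b ∈ Ico m (c + 1), g b := by
        rw [sum_range_reflect, sum_range_add_sum_Ico _ (by omega)]
    _ = ∑ b ∈ range m, r b := by
        rw [sum_eq_zero fun b hb => if_neg (mem_Ico.1 hb).1.not_gt, add_zero]
        exact sum_congr rfl fun b hb => if_pos (mem_range.1 hb)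

lemma sum_range_mul_sub_le (hr : ∀ n, 0 ≤ r n) (hanti : Antitone r) {c m : ℕ} {η : ℝ}
    (hη₀ : 0 ≤ η) (hη₁ : η ≤ 1) (hmc : 2 * m ≤ c) (hm : r m ≤ (1 + η) * r c) :
    ∑ a ∈ range c, r a * (r (c - a) - r c)
      ≤ η * r c * ∑ a ∈ range c, r a + 2 * r c * ∑ b ∈ range m, r b := by
  have hterm : ∀ a ∈ range c, r a * (r (c - a) - r c)
      ≤ η * r c * r a + 2 * r c * (if c - a < m then r (c - a) else 0) := by
    intro a ha
    have hd : r c ≤ r (c - a) := hanti (Nat.sub_le c a)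
    split_ifs with h
    · have hra : r a ≤ r m := hanti (by have := mem_range.1 ha; omega)
      have h2 : r a ≤ 2 * r c := by nlinarith [hr c]
      nlinarith [mul_le_mul_of_nonneg_right h2 (hr (c - a)), mul_nonneg (hr a) (hr c),
        mul_nonneg hη₀ (mul_nonneg (hr c) (hr a))]
    · have hrca : r (c - a) ≤ r m := hanti (by omega)
      nlinarith [hr a, hr c]
  calc ∑ a ∈ range c, r a * (r (c - a) - r c)
      ≤ ∑ a ∈ range c, (η * r c * r a + 2 * r c * (if c - a < m then r (c - a) else 0)) :=
        sum_le_sum hterm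
    _ ≤ η * r c * ∑ a ∈ range c, r a + 2 * r c * ∑ b ∈ range m, r b := by
        rw [sum_add_distrib, ← mul_sum, ← mul_sum]
        gcongr
        · exact mul_nonneg zero_le_two (hr c)
        · exact sum_range_ite_sub_lt_le hr (by omega)

variable (hr : ∀ n, 0 < r n) (hanti : Antitone r)
  (hslow : ∀ c : ℝ, 0 < c → ∀ η : ℝ, 0 < η → ∀ᶠ n : ℕ in atTop, r ⌊c * n⌋₊ ≤ (1 + η) * r n)

include hr hanti hslow

lemma exists_sum_range_le_mul : ∃ M, 0 < M ∧ ∀ n, ∑ k ∈ range n, r k ≤ M * (n * r n) := by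
  obtain ⟨N, hN⟩ := eventually_atTop.1 (hslow (1 / 2) one_half_pos (1 / 4) (by norm_num))
  -- `10 / 3` is the fixed point of `M ↦ (5 / 4) * (M / 2 + 1)`, the recursion from `n / 2` to `n`.
  set M := max (10 / 3) (r 0 / r N)
  have hM : 10 / 3 ≤ M := le_max_left _ _
  refine ⟨M, by linarith, fun n => ?_⟩
  induction n using Nat.strong_induction_on with
  | _ n ih =>
  have hn0 : (0 : ℝ) ≤ n := n.cast_nonneg
  rcases lt_or_ge n N with hnN | hNn
  · have h0 : r 0 ≤ r 0 / r N * r n := by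
      rw [div_mul_eq_mul_div, le_div_iff₀ (hr N)]
      exact mul_le_mul_of_nonneg_left (hanti hnN.le) (hr 0).le
    calc ∑ k ∈ range n, r k ≤ n * r 0 := by
          simpa using sum_le_card_nsmul (range n) r (r 0) fun k _ => hanti k.zero_le
      _ ≤ n * (r 0 / r N * r n) := by gcongr
      _ ≤ M * (n * r n) := by
          rw [mul_left_comm]
          exact mul_le_mul_of_nonneg_right (le_max_right _ _) (mul_nonneg hn0 (hr n).le)
  · rcases Nat.eq_zero_or_pos n with rfl | hn
    · simp
    set m := ⌊(1 / 2 : ℝ) * n⌋₊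
    have hm : (m : ℝ) ≤ 1 / 2 * n := Nat.floor_le (by positivity)
    have hmn : m < n := by
      have : (1 / 2 : ℝ) * n < n := by linarith [(Nat.one_le_cast (α := ℝ)).2 hn]
      exact_mod_cast hm.trans_lt this
    have hrm : r m ≤ (1 + 1 / 4) * r n := hN n hNn
    calc ∑ k ∈ range n, r k ≤ ∑ k ∈ range m, r k + n * r m :=
          sum_range_le_add_mul (fun k => (hr k).le) hanti m n
      _ ≤ M * (m * r m) + n * r m := by gcongr; exact ih m hmn
      _ ≤ (M / 2 + 1) * n * r m := by
          nlinarith [mul_le_mul_of_nonneg_left hm (mul_nonneg (by linarith : 0 ≤ M) (hr m).le)]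
      _ ≤ (M / 2 + 1) * n * ((1 + 1 / 4) * r n) := by gcongr
      _ ≤ M * (n * r n) := by
          nlinarith [mul_nonneg (mul_nonneg hn0 (hr n).le) (by linarith : 0 ≤ 3 / 8 * M - 5 / 4)]

lemma eventually_sum_range_le {η : ℝ} (hη : 0 < η) :
    ∀ᶠ n in atTop, ∑ k ∈ range n, r k ≤ (1 + η) ^ 2 * (n * r n) := by
  obtain ⟨M, hM, hbound⟩ := exists_sum_range_le_mul hr hanti hslow
  filter_upwards [hslow (η / M) (div_pos hη hM) η hη] with n hn
  set m := ⌊η / M * n⌋₊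
  have hm : (m : ℝ) ≤ η / M * n := Nat.floor_le (by positivity)
  have hMm : M * m ≤ η * n := by
    calc M * m ≤ M * (η / M * n) := by gcongr
      _ = η * n := by field_simp
  calc ∑ k ∈ range n, r k ≤ ∑ k ∈ range m, r k + n * r m :=
        sum_range_le_add_mul (fun k => (hr k).le) hanti m n
    _ ≤ M * (m * r m) + n * r m := by gcongr; exact hbound m
    _ ≤ (1 + η) * n * r m := by nlinarith [mul_le_mul_of_nonneg_right hMm (hr m).le]
    _ ≤ (1 + η) * n * ((1 + η) * r n) := by gcongr
    _ = (1 + η) ^ 2 * (n * r n) := by ring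

lemma tendsto_sum_range_div_mul :
    Tendsto (fun n => (∑ k ∈ range n, r k) / (n * r n)) atTop (𝓝 1) := by
  refine tendsto_order.2 ⟨fun b hb => ?_, fun b hb => ?_⟩
  · filter_upwards [eventually_ge_atTop 1] with n hn
    have hpos : 0 < (n : ℝ) * r n := mul_pos (by exact_mod_cast hn) (hr n)
    rw [lt_div_iff₀ hpos]
    nlinarith [mul_le_sum_range hanti n]
  · set η := min 1 ((b - 1) / 4)
    have hη : 0 < η := lt_min one_pos (by linarith)
    have hηb : (1 + η) ^ 2 < b := by
      nlinarith [min_le_left 1 ((b - 1) / 4), min_le_right 1 ((b - 1) / 4)]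
    filter_upwards [eventually_sum_range_le hr hanti hslow hη, eventually_ge_atTop 1] with n hn hn1
    have hpos : 0 < (n : ℝ) * r n := mul_pos (by exact_mod_cast hn1) (hr n)
    rw [div_lt_iff₀ hpos]
    nlinarith

lemma tendsto_sum_range_atTop : Tendsto (fun n => ∑ k ∈ range n, r k) atTop atTop := by
  rw [← not_summable_iff_tendsto_nat_atTop_of_nonneg fun n => (hr n).le,
    ← summable_condensed_iff_of_nonneg (fun n => (hr n).le) fun _ _ _ h => hanti h]
  -- By condensation it suffices that `2 ^ k * r (2 ^ k)` is eventually nondecreasing.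
  intro hsum
  obtain ⟨N, hN⟩ := eventually_atTop.1 (hslow (1 / 2) one_half_pos 1 one_pos)
  have hstep : ∀ k, N ≤ k → (2 : ℝ) ^ k * r (2 ^ k) ≤ 2 ^ (k + 1) * r (2 ^ (k + 1)) := by
    intro k hk
    have h := hN (2 ^ (k + 1)) (hk.trans (Nat.lt_two_pow_self.trans
      (Nat.pow_lt_pow_right one_lt_two k.lt_succ_self)).le)
    have hfloor : ⌊(1 / 2 : ℝ) * ((2 ^ (k + 1) : ℕ) : ℝ)⌋₊ = 2 ^ k := by
      rw [show (1 / 2 : ℝ) * ((2 ^ (k + 1) : ℕ) : ℝ) = ((2 ^ k : ℕ) : ℝ) by push_cast; ring,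
        Nat.floor_natCast]
    rw [hfloor] at h
    calc (2 : ℝ) ^ k * r (2 ^ k) ≤ 2 ^ k * ((1 + 1) * r (2 ^ (k + 1))) := by gcongr
      _ = 2 ^ (k + 1) * r (2 ^ (k + 1)) := by ring
  have hgrow : ∀ k, N ≤ k → (2 : ℝ) ^ N * r (2 ^ N) ≤ 2 ^ k * r (2 ^ k) := by
    intro k hk
    induction k, hk using Nat.le_induction with
    | base => exact le_rfl
    | succ k hk ih => exact ih.trans (hstep k hk)
  obtain ⟨k, hk, hNk⟩ := ((hsum.tendsto_atTop_zero.eventually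
    (gt_mem_nhds (mul_pos (pow_pos two_pos N) (hr (2 ^ N))))).and (eventually_ge_atTop N)).exists
  exact (hgrow k hNk).not_gt hk

lemma eventually_sum_range_mul_sub_le {θ : ℝ} (hθ : 0 < θ) :
    ∀ᶠ c in atTop, ∑ a ∈ range c, r a * (r (c - a) - r c) ≤ θ * (r c * ∑ a ∈ range c, r a) := by
  obtain ⟨M, hM, hbound⟩ := exists_sum_range_le_mul hr hanti hslow
  set η := min 1 (θ / 2)
  set ε := min (1 / 2) (θ / (8 * M))
  have hη : 0 < η := lt_min one_pos (by positivity)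
  have hε : 0 < ε := lt_min one_half_pos (by positivity)
  have hεM : M * ε ≤ θ / 8 := by
    calc M * ε ≤ M * (θ / (8 * M)) := by gcongr; exact min_le_right _ _
      _ = θ / 8 := by field_simp
  filter_upwards [hslow ε hε η hη] with c hc
  set m := ⌊ε * c⌋₊
  have hm : (m : ℝ) ≤ ε * c := Nat.floor_le (by positivity)
  have hmc : 2 * m ≤ c := by
    have : 2 * (m : ℝ) ≤ c := by
      nlinarith [min_le_left (1 / 2 : ℝ) (θ / (8 * M)), (c.cast_nonneg : (0 : ℝ) ≤ c)]
    exact_mod_cast this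
  have hcr := mul_le_sum_range hanti c
  have ham : ∑ b ∈ range m, r b ≤ θ / 4 * ∑ a ∈ range c, r a := by
    calc ∑ b ∈ range m, r b ≤ M * (m * r m) := hbound m
      _ ≤ M * ((ε * c) * ((1 + 1) * r c)) := by
          have hrm : r m ≤ (1 + 1) * r c :=
            hc.trans (mul_le_mul_of_nonneg_right (by linarith [min_le_left 1 (θ / 2)]) (hr c).le)
          gcongr; exact (hr _).le
      _ = 2 * (M * ε) * (c * r c) := by ring
      _ ≤ 2 * (θ / 8) * (c * r c) := by gcongr; exact mul_nonneg c.cast_nonneg (hr c).le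
      _ ≤ θ / 4 * ∑ a ∈ range c, r a := by nlinarith
  calc ∑ a ∈ range c, r a * (r (c - a) - r c)
      ≤ η * r c * ∑ a ∈ range c, r a + 2 * r c * ∑ b ∈ range m, r b :=
        sum_range_mul_sub_le (fun n => (hr n).le) hanti hη.le (min_le_left _ _) hmc hc
    _ ≤ θ / 2 * r c * ∑ a ∈ range c, r a + 2 * r c * (θ / 4 * ∑ a ∈ range c, r a) := by
        have := (hr c).le
        have : 0 ≤ ∑ a ∈ range c, r a := sum_nonneg fun a _ => (hr a).le
        gcongr; exact min_le_right _ _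
    _ = θ * (r c * ∑ a ∈ range c, r a) := by ring

lemma exists_eventually_pairExcess_le {θ : ℝ} (hθ : 0 < θ) :
    ∃ B, ∀ᶠ n in atTop, pairExcess r n ≤ B + θ * (∑ k ∈ range n, r k) ^ 2 := by
  obtain ⟨C, hC⟩ := eventually_atTop.1 (eventually_sum_range_mul_sub_le hr hanti hslow hθ)
  refine ⟨pairExcess r C, ?_⟩
  filter_upwards [eventually_ge_atTop C] with n hn
  have hmono : ∀ c ∈ range n, ∑ a ∈ range c, r a ≤ ∑ k ∈ range n, r k := fun c hc =>
    sum_le_sum_of_subset_of_nonneg (range_subset_range.2 (mem_range.1 hc).le)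
      fun k _ _ => (hr k).le
  calc pairExcess r n
      = pairExcess r C + ∑ c ∈ Ico C n, ∑ a ∈ range c, r a * (r (c - a) - r c) :=
        (sum_range_add_sum_Ico _ hn).symm
    _ ≤ pairExcess r C + ∑ c ∈ Ico C n, θ * (r c * ∑ k ∈ range n, r k) := by
        gcongr with c hc
        have hcn : c ∈ range n := mem_range.2 (mem_Ico.1 hc).2
        exact (hC c (mem_Ico.1 hc).1).trans
          (mul_le_mul_of_nonneg_left (mul_le_mul_of_nonneg_left (hmono c hcn) (hr c).le) hθ.le)
    _ ≤ pairExcess r C + ∑ c ∈ range n, θ * (r c * ∑ k ∈ range n, r k) := by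
        gcongr
        · intro c _ _
          have := sum_nonneg fun k (_ : k ∈ range n) => (hr k).le
          have := (hr c).le
          positivity
        · exact fun c hc => mem_range.2 (mem_Ico.1 hc).2
    _ = pairExcess r C + θ * (∑ k ∈ range n, r k) ^ 2 := by
        rw [← mul_sum, ← sum_mul, sq]

lemma eventually_add_two_mul_pairExcess_le {ε : ℝ} (hε : 0 < ε) :
    ∀ᶠ n in atTop, ∑ k ∈ range n, r k + 2 * pairExcess r n ≤ ε * (∑ k ∈ range n, r k) ^ 2 := by
  obtain ⟨B, hB⟩ := exists_eventually_pairExcess_le hr hanti hslow (half_pos (half_pos hε))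
  filter_upwards [hB, (tendsto_sum_range_atTop hr hanti hslow).eventually_ge_atTop
    (max 1 (2 * (1 + 2 * |B|) / ε))] with n hn ha
  set a := ∑ k ∈ range n, r k
  have ha1 : 1 ≤ a := le_of_max_le_left ha
  have ha2 : 2 * (1 + 2 * |B|) ≤ ε * a := by
    have := le_of_max_le_right ha
    rw [div_le_iff₀ hε] at this
    linarith
  nlinarith [le_abs_self B, mul_le_mul_of_nonneg_right ha2 (by linarith : 0 ≤ a),
    mul_nonneg (abs_nonneg B) (by linarith : 0 ≤ a - 1)]

end SlowVariation

section Indicators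

variable {Ω : Type*} [MeasurableSpace Ω] {μ : Measure Ω} {A : ℕ → Set Ω}

lemma memLp_indicator_one [IsFiniteMeasure μ] {s : Set Ω} (hs : MeasurableSet s) :
    MemLp (s.indicator (1 : Ω → ℝ)) 2 μ :=
  (memLp_const (1 : ℝ)).indicator hs

lemma covariance_indicator_one [IsProbabilityMeasure μ] {s t : Set Ω} (hs : MeasurableSet s)
    (ht : MeasurableSet t) :
    cov[s.indicator 1, t.indicator 1; μ] = μ.real (s ∩ t) - μ.real s * μ.real t := by
  rw [covariance_eq_sub (memLp_indicator_one hs) (memLp_indicator_one ht),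
    ← Set.inter_indicator_one, integral_indicator_one hs, integral_indicator_one ht,
    integral_indicator_one (hs.inter ht)]

lemma integral_sum_indicator_one [IsFiniteMeasure μ] (hA : ∀ i, MeasurableSet (A i)) (n : ℕ) :
    ∫ ω, ∑ i ∈ range n, (A i).indicator 1 ω ∂μ = ∑ i ∈ range n, μ.real (A i) := by
  rw [integral_finsetSum _ fun i _ => (integrable_const 1).indicator (hA i)]
  exact sum_congr rfl fun i _ => integral_indicator_one (hA i)

lemma memLp_sum_indicator_one [IsFiniteMeasure μ] (hA : ∀ i, MeasurableSet (A i)) (n : ℕ) :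
    MemLp (fun ω => ∑ i ∈ range n, (A i).indicator (1 : Ω → ℝ) ω) 2 μ :=
  memLp_finsetSum (range n) fun i _ => memLp_indicator_one (hA i)

lemma variance_sum_indicator_one_le [IsProbabilityMeasure μ] (hA : ∀ i, MeasurableSet (A i))
    {p : ℕ → ℝ} {n : ℕ} (hp : ∀ i < n, μ.real (A i) = p i)
    (hpair : ∀ a c, a < c → c < n → μ.real (A a ∩ A c) ≤ p a * p (c - a)) :
    Var[fun ω => ∑ i ∈ range n, (A i).indicator 1 ω; μ]
      ≤ ∑ i ∈ range n, p i + 2 * pairExcess p n := by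
  rw [variance_fun_sum' fun i _ => memLp_indicator_one (hA i),
    sum_range_sum_range_eq_of_symm _ (fun i j => covariance_comm _ _) n, nsmul_eq_mul,
    Nat.cast_ofNat]
  gcongr with i hi c hc
  · have hi := mem_range.1 hi
    rw [covariance_indicator_one (hA i) (hA i), Set.inter_self, hp i hi]
    nlinarith [sq_nonneg (p i)]
  · unfold pairExcess
    gcongr with c hc a ha
    have hc := mem_range.1 hc
    have ha := mem_range.1 ha
    rw [covariance_indicator_one (hA a) (hA c), hp a (ha.trans hc), hp c hc]
    linarith [hpair a c ha hc]

lemma tendsto_measureReal_abs_div_integral_sub_one_gt [IsFiniteMeasure μ] {X : ℕ → Ω → ℝ}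
    (hX : ∀ n, MemLp (X n) 2 μ) (hpos : ∀ᶠ n in atTop, 0 < μ[X n])
    (hvar : ∀ ε, 0 < ε → ∀ᶠ n in atTop, Var[X n; μ] ≤ ε * μ[X n] ^ 2) {δ : ℝ} (hδ : 0 < δ) :
    Tendsto (fun n => μ.real {ω | δ < |X n ω / μ[X n] - 1|}) atTop (𝓝 0) := by
  refine tendsto_order.2 ⟨fun b hb => Eventually.of_forall fun n => hb.trans_le measureReal_nonneg,
    fun b hb => ?_⟩
  filter_upwards [hpos, hvar (b * δ ^ 2 / 2) (by positivity)] with n hm hv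
  set m := μ[X n]
  have hsub : {ω | δ < |X n ω / m - 1|} ⊆ {ω | δ * m ≤ |X n ω - m|} := by
    intro ω hω
    simp only [Set.mem_ofPred_eq] at hω ⊢
    rw [div_sub_one hm.ne', abs_div, abs_of_pos hm, lt_div_iff₀ hm] at hω
    exact hω.le
  calc μ.real {ω | δ < |X n ω / m - 1|} ≤ μ.real {ω | δ * m ≤ |X n ω - m|} := measureReal_mono hsub
    _ ≤ Var[X n; μ] / (δ * m) ^ 2 := by
        rw [measureReal_def]
        exact ENNReal.toReal_le_of_le_ofReal (div_nonneg (variance_nonneg _ _) (sq_nonneg _))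
          (meas_ge_le_variance_div_sq (hX n) (by positivity))
    _ ≤ b * δ ^ 2 / 2 * m ^ 2 / (δ * m) ^ 2 := by gcongr
    _ = b / 2 := by field_simp
    _ < b := half_lt_self hb

end Indicators

section Walk

variable {Ω G : Type*} {ξ : ℕ → Ω → G}

def block (ξ : ℕ → Ω → G) (k m : ℕ) (ω : Ω) : Fin m → G := fun i => ξ (k + i) ω

section Block

variable [MeasurableSpace Ω] [MeasurableSpace G] {μ : Measure Ω}

lemma measurable_block (hξ : ∀ i, Measurable (ξ i)) (k m : ℕ) : Measurable (block ξ k m) :=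
  measurable_pi_lambda _ fun _ => hξ _

lemma indepFun_block [MeasurableSingletonClass G] [Countable G] (hξ : ∀ i, Measurable (ξ i))
    (hind : iIndepFun ξ μ) {j k m₁ m₂ : ℕ} (h : j + m₁ ≤ k) :
    IndepFun (block ξ j m₁) (block ξ k m₂) μ := by
  have hdisj : Disjoint (Ico j (j + m₁)) (Ico k (k + m₂)) :=
    disjoint_left.2 fun t ht ht' => by simp only [mem_Ico] at ht ht'; omega
  exact (hind.indepFun_finset _ _ hdisj hξ).comp
    (φ := fun (x : Ico j (j + m₁) → G) (i : Fin m₁) => x ⟨j + i, by simp⟩)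
    (ψ := fun (x : Ico k (k + m₂) → G) (i : Fin m₂) => x ⟨k + i, by simp⟩)
    (measurable_of_countable _) (measurable_of_countable _)

end Block

variable [AddCommGroup G]

def noReturn (ξ : ℕ → Ω → G) (k m : ℕ) : Set Ω :=
  {ω | ∀ j, 1 ≤ j → j ≤ m → ∑ t ∈ range j, ξ (k + t) ω ≠ 0}

lemma noReturn_anti (ξ : ℕ → Ω → G) (k : ℕ) {m m' : ℕ} (h : m ≤ m') :
    noReturn ξ k m' ⊆ noReturn ξ k m :=
  fun _ hω j hj hjm => hω j hj (hjm.trans h)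

lemma noReturn_eq_preimage_block (ξ : ℕ → Ω → G) (k m : ℕ) :
    noReturn ξ k m = block ξ k m ⁻¹'
      {x | ∀ j, 1 ≤ j → j ≤ m → ∑ t ∈ range j, (if h : t < m then x ⟨t, h⟩ else 0) ≠ 0} := by
  ext ω
  refine forall_congr' fun j => forall_congr' fun _ => forall_congr' fun hjm => ?_
  have hblock : ∀ t ∈ range j, (if h : t < m then block ξ k m ω ⟨t, h⟩ else 0) = ξ (k + t) ω :=
    fun t ht => dif_pos ((mem_range.1 ht).trans_le hjm)
  rw [sum_congr rfl hblock]

section Path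

variable {Y : ℕ → Ω → G}

lemma noReturn_zero_eq (hY : ∀ n ω, Y n ω = ∑ i ∈ range n, ξ i ω) (m : ℕ) :
    noReturn ξ 0 m = {ω | ∀ k, 1 ≤ k → k ≤ m → Y k ω ≠ 0} := by
  simp [noReturn, hY]

lemma setOf_forall_ne_eq_noReturn (hY : ∀ n ω, Y n ω = ∑ i ∈ range n, ξ i ω) {k m n : ℕ}
    (h : k + m + 1 = n) : {ω | ∀ j ∈ Ioo k n, Y j ω ≠ Y k ω} = noReturn ξ k m := by
  have hYadd : ∀ t ω, Y (k + t) ω = Y k ω + ∑ s ∈ range t, ξ (k + s) ω := fun t ω => by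
    rw [hY, hY, sum_range_add]
  ext ω
  simp only [Set.mem_ofPred_eq, noReturn, mem_Ioo]
  constructor
  · intro hω t ht htm
    rw [← add_ne_left (a := Y k ω), ← hYadd]
    exact hω (k + t) ⟨by omega, by omega⟩
  · rintro hω j ⟨hkj, hjn⟩
    obtain ⟨t, rfl⟩ : ∃ t, j = k + t := ⟨j - k, by omega⟩
    rw [hYadd, add_ne_left]
    exact hω t (by omega) (by omega)

lemma card_image_range_eq_sum_indicator [DecidableEq G]
    (hY : ∀ n ω, Y n ω = ∑ i ∈ range n, ξ i ω) (n : ℕ) (ω : Ω) :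
    (#((range n).image fun k => Y k ω) : ℝ)
      = ∑ i ∈ range n, (noReturn ξ (n - 1 - i) i).indicator 1 ω := by
  rw [card_image_range_eq_card_filter, card_filter, Nat.cast_sum]
  refine (sum_range_reflect _ n).symm.trans (sum_congr rfl fun i hi => ?_)
  rw [← setOf_forall_ne_eq_noReturn hY (by have := mem_range.1 hi; omega : n - 1 - i + i + 1 = n)]
  simp only [Set.indicator_apply, Set.mem_ofPred_eq]
  split_ifs <;> simp

end Path

variable [MeasurableSpace Ω] [MeasurableSpace G] [MeasurableSingletonClass G] [Countable G]
  {μ : Measure Ω}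

lemma measurableSet_noReturn (hξ : ∀ i, Measurable (ξ i)) (k m : ℕ) :
    MeasurableSet (noReturn ξ k m) := by
  rw [noReturn_eq_preimage_block]
  exact measurable_block hξ k m (Set.to_countable _).measurableSet

lemma measure_noReturn_inter (hξ : ∀ i, Measurable (ξ i)) (hind : iIndepFun ξ μ)
    {j k m₁ m₂ : ℕ} (h : j + m₁ ≤ k) :
    μ (noReturn ξ j m₁ ∩ noReturn ξ k m₂) = μ (noReturn ξ j m₁) * μ (noReturn ξ k m₂) := by
  simp only [noReturn_eq_preimage_block]
  exact (indepFun_block hξ hind h).measure_inter_preimage_eq_mul _ _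
    (Set.to_countable _).measurableSet (Set.to_countable _).measurableSet

lemma measure_noReturn_eq [IsFiniteMeasure μ] (hξ : ∀ i, Measurable (ξ i)) (hind : iIndepFun ξ μ)
    (hident : ∀ i, μ.map (ξ i) = μ.map (ξ 0)) (k m : ℕ) :
    μ (noReturn ξ k m) = μ (noReturn ξ 0 m) := by
  have hlaw : ∀ k, μ.map (block ξ k m) = Measure.pi fun _ : Fin m => μ.map (ξ 0) := fun k =>
    calc μ.map (block ξ k m) = Measure.pi fun i : Fin m => μ.map (ξ (k + i)) :=
          (hind.precomp (g := fun i : Fin m => k + (i : ℕ))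
            ((add_right_injective k).comp Fin.val_injective)).map_fun_eq_pi_map
            fun _ => (hξ _).aemeasurable
      _ = _ := by congr 1; funext i; exact hident _
  simp only [noReturn_eq_preimage_block]
  rw [← Measure.map_apply (measurable_block hξ k m) (Set.to_countable _).measurableSet,
    ← Measure.map_apply (measurable_block hξ 0 m) (Set.to_countable _).measurableSet, hlaw, hlaw]

lemma measureReal_noReturn_inter_le [IsFiniteMeasure μ] (hξ : ∀ i, Measurable (ξ i))
    (hind : iIndepFun ξ μ) (hident : ∀ i, μ.map (ξ i) = μ.map (ξ 0)) {a c n : ℕ}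
    (hac : a < c) (hcn : c < n) :
    μ.real (noReturn ξ (n - 1 - a) a ∩ noReturn ξ (n - 1 - c) c)
      ≤ μ.real (noReturn ξ 0 a) * μ.real (noReturn ξ 0 (c - a)) := by
  have hsep : n - 1 - c + (c - a) ≤ n - 1 - a := by omega
  calc μ.real (noReturn ξ (n - 1 - a) a ∩ noReturn ξ (n - 1 - c) c)
      ≤ μ.real (noReturn ξ (n - 1 - c) (c - a) ∩ noReturn ξ (n - 1 - a) a) :=
        measureReal_mono fun ω hω => ⟨noReturn_anti ξ _ (Nat.sub_le c a) hω.2, hω.1⟩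
    _ = μ.real (noReturn ξ 0 a) * μ.real (noReturn ξ 0 (c - a)) := by
        simp only [measureReal_def, measure_noReturn_inter hξ hind hsep, ENNReal.toReal_mul,
          measure_noReturn_eq hξ hind hident _ a, measure_noReturn_eq hξ hind hident _ (c - a),
          mul_comm]

lemma memLp_card_image_range [IsFiniteMeasure μ] [DecidableEq G] {Y : ℕ → Ω → G}
    (hξ : ∀ i, Measurable (ξ i)) (hY : ∀ n ω, Y n ω = ∑ i ∈ range n, ξ i ω) (n : ℕ) :
    MemLp (fun ω => (#((range n).image fun k => Y k ω) : ℝ)) 2 μ := by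
  simp_rw [card_image_range_eq_sum_indicator hY]
  exact memLp_sum_indicator_one (A := fun i => noReturn ξ (n - 1 - i) i)
    (fun _ => measurableSet_noReturn hξ _ _) n

lemma integral_card_image_range [IsProbabilityMeasure μ] [DecidableEq G] {Y : ℕ → Ω → G}
    (hξ : ∀ i, Measurable (ξ i)) (hind : iIndepFun ξ μ) (hident : ∀ i, μ.map (ξ i) = μ.map (ξ 0))
    (hY : ∀ n ω, Y n ω = ∑ i ∈ range n, ξ i ω) (n : ℕ) :
    ∫ ω, (#((range n).image fun k => Y k ω) : ℝ) ∂μ = ∑ k ∈ range n, μ.real (noReturn ξ 0 k) := by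
  simp_rw [card_image_range_eq_sum_indicator hY]
  rw [integral_sum_indicator_one (A := fun i => noReturn ξ (n - 1 - i) i)
    (fun _ => measurableSet_noReturn hξ _ _)]
  exact sum_congr rfl fun k _ => by
    simp only [measureReal_def, measure_noReturn_eq hξ hind hident _ k]

lemma variance_card_image_range_le [IsProbabilityMeasure μ] [DecidableEq G] {Y : ℕ → Ω → G}
    (hξ : ∀ i, Measurable (ξ i)) (hind : iIndepFun ξ μ) (hident : ∀ i, μ.map (ξ i) = μ.map (ξ 0))
    (hY : ∀ n ω, Y n ω = ∑ i ∈ range n, ξ i ω) (n : ℕ) :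
    Var[fun ω => (#((range n).image fun k => Y k ω) : ℝ); μ]
      ≤ ∑ k ∈ range n, μ.real (noReturn ξ 0 k)
        + 2 * pairExcess (fun m => μ.real (noReturn ξ 0 m)) n := by
  simp_rw [card_image_range_eq_sum_indicator hY]
  refine variance_sum_indicator_one_le (A := fun i => noReturn ξ (n - 1 - i) i)
    (fun _ => measurableSet_noReturn hξ _ _) (fun i _ => ?_)
    fun a c hac hcn => measureReal_noReturn_inter_le hξ hind hident hac hcn
  simp only [measureReal_def, measure_noReturn_eq hξ hind hident _ i]

end Walk

end RandomWalkRange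

open RandomWalkRange in
theorem lln_range_general
    (d : ℕ)
    (Ω : Type) [MeasureSpace Ω] [IsProbabilityMeasure (ℙ : Measure Ω)]
    (ν : Measure (Fin d → ℤ))
    (ξ : ℕ → Ω → (Fin d → ℤ))
    (hξmeas : ∀ i, Measurable (ξ i))
    (hξindep : iIndepFun ξ ℙ)
    (hξlaw : ∀ i, Measure.map (ξ i) ℙ = ν)
    (Y : ℕ → Ω → (Fin d → ℤ))
    (hY : ∀ n ω, Y n ω = ∑ i ∈ Finset.range n, ξ i ω)
    (r : ℕ → ℝ)
    (hr : ∀ n, r n = (ℙ {ω | ∀ k, 1 ≤ k → k ≤ n → Y k ω ≠ 0}).toReal)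
    -- Assumption (S)
    (ℓs : ℕ → ℝ) (hℓ1 : ∀ n, 1 ≤ ℓs n)
    (hslow : ∀ c : ℝ, 0 < c →
      Tendsto (fun n : ℕ => ℓs ⌊c * n⌋₊ / ℓs n) atTop (𝓝 1))
    (hrℓ : ∀ n, r n = 1 / ℓs n)
    -- the range
    (R : ℕ → Ω → Finset (Fin d → ℤ))
    (hR : ∀ n ω, R n ω = (Finset.range n).image (fun k => Y k ω)) :
    -- 𝔼|R(n)| = (n/ℓ*(n))(1+o(1))
    Tendsto (fun n : ℕ => (∫ ω, ((R n ω).card : ℝ) ∂ℙ) * ℓs n / n) atTop (𝓝 1) ∧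
    -- weak law of large numbers for |R(n)|
    (∀ δ : ℝ, 0 < δ →
      Tendsto (fun n : ℕ =>
        (ℙ {ω | δ < |((R n ω).card : ℝ) / (∫ ω', ((R n ω').card : ℝ) ∂ℙ) - 1|}).toReal)
        atTop (𝓝 0)) := by
  have hident : ∀ i, Measure.map (ξ i) ℙ = Measure.map (ξ 0) ℙ := fun i =>
    (hξlaw i).trans (hξlaw 0).symm
  have hℓ : ∀ n, 0 < ℓs n := fun n => one_pos.trans_le (hℓ1 n)
  have hr_eq : r = fun m => Measure.real ℙ (noReturn ξ 0 m) := funext fun m => by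
    rw [hr, noReturn_zero_eq hY]; rfl
  have hr_pos : ∀ n, 0 < r n := fun n => by rw [hrℓ]; exact one_div_pos.2 (hℓ n)
  have hr_anti : Antitone r := by
    rw [hr_eq]; exact fun m n h => measureReal_mono (noReturn_anti ξ 0 h)
  have hr_slow : ∀ c : ℝ, 0 < c → ∀ η : ℝ, 0 < η → ∀ᶠ n : ℕ in atTop, r ⌊c * n⌋₊ ≤ (1 + η) * r n :=
    fun c hc η hη => by
      simpa only [hrℓ, one_div] using eventually_inv_le_of_tendsto_div hℓ (hslow c hc) hη
  have hmean : ∀ n, ∫ ω, ((R n ω).card : ℝ) ∂ℙ = ∑ k ∈ range n, r k := fun n => by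
    simpa only [hR, hr_eq] using integral_card_image_range hξmeas hξindep hident hY n
  refine ⟨?_, fun δ hδ => ?_⟩
  · refine (tendsto_sum_range_div_mul hr_pos hr_anti hr_slow).congr fun n => ?_
    rw [hmean, hrℓ, one_div, div_mul_eq_div_div, div_inv_eq_mul, div_mul_eq_mul_div]
  · refine tendsto_measureReal_abs_div_integral_sub_one_gt
      (fun n => by simpa only [hR] using memLp_card_image_range hξmeas hY n) ?_ (fun ε hε => ?_) hδ
    · filter_upwards [(tendsto_sum_range_atTop hr_pos hr_anti hr_slow).eventually_gt_atTop 0]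
        with n hn
      rwa [hmean]
    · filter_upwards [eventually_add_two_mul_pairExcess_le hr_pos hr_anti hr_slow hε] with n hn
      rw [hmean]
      refine le_trans ?_ hn
      simpa only [hR, hr_eq] using variance_card_image_range_le hξmeas hξindep hident hY n

/-- under Assumption (S) (`r_n = 1/ℓ*(n)` with `ℓ*` slowly varying),
`𝔼[|R(n)|] = (n/ℓ*(n))(1+o(1))` and `|R(n)|/𝔼[|R(n)|] → 1` in probability. -/
theorem lln_range
    (d : ℕ) (hd : 1 ≤ d)
    (Ω : Type) [MeasureSpace Ω] [IsProbabilityMeasure (ℙ : Measure Ω)]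
    (ν : Measure (Fin d → ℤ)) [IsProbabilityMeasure ν]
    (hν : ν ≠ Measure.dirac 0)
    (ξ : ℕ → Ω → (Fin d → ℤ))
    (hξmeas : ∀ i, Measurable (ξ i))
    (hξindep : iIndepFun ξ ℙ)
    (hξlaw : ∀ i, Measure.map (ξ i) ℙ = ν)
    (Y : ℕ → Ω → (Fin d → ℤ))
    (hY : ∀ n ω, Y n ω = ∑ i ∈ Finset.range n, ξ i ω)
    (r : ℕ → ℝ)
    (hr : ∀ n, r n = (ℙ {ω | ∀ k, 1 ≤ k → k ≤ n → Y k ω ≠ 0}).toReal)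
    -- Assumption (S)
    (ℓs : ℕ → ℝ) (hℓ1 : ∀ n, 1 ≤ ℓs n)
    (hslow : ∀ c : ℝ, 0 < c →
      Tendsto (fun n : ℕ => ℓs ⌊c * n⌋₊ / ℓs n) atTop (𝓝 1))
    (hrℓ : ∀ n, r n = 1 / ℓs n)
    -- the range
    (R : ℕ → Ω → Finset (Fin d → ℤ))
    (hR : ∀ n ω, R n ω = (Finset.range n).image (fun k => Y k ω)) :
    -- 𝔼|R(n)| = (n/ℓ*(n))(1+o(1))
    Tendsto (fun n : ℕ => (∫ ω, ((R n ω).card : ℝ) ∂ℙ) * ℓs n / n) atTop (𝓝 1) ∧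
    -- weak law of large numbers for |R(n)|
    (∀ δ : ℝ, 0 < δ →
      Tendsto (fun n : ℕ =>
        (ℙ {ω | δ < |((R n ω).card : ℝ) / (∫ ω', ((R n ω').card : ℝ) ∂ℙ) - 1|}).toReal)
        atTop (𝓝 0)) :=
  lln_range_general d Ω ν ξ hξmeas hξindep hξlaw Y hY r hr ℓs hℓ1 hslow hrℓ R hR
end

section
/- Let ψ_k = 1{Y(l) ≠ Y(k) for all 0 ≤ l < k} (with ψ₀ = 1) be the indicator that the random walk visits a new vertex at time k. Then for all 0 ≤ i ≤ j, 𝔼[ψ_i ψ_j] ≤ 𝔼[ψ_i] · 𝔼[ψ_{j−i}]. -/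
/-!
The event that the walk is at a new site at time `j` only gets smaller if we require merely
`Y(l) ≠ Y(j)` for `i ≤ l < j`. That weaker event is a function of the increments
`ξ_i, …, ξ_{j-1}`, hence independent of the event at time `i` (a function of `ξ_0, …, ξ_{i-1}`),
and since these increments have the same joint law as `ξ_0, …, ξ_{j-i-1}`, its probability is
that of the walk being at a new site at time `j - i`.
-/

open MeasureTheory ProbabilityTheory Finset

variable {Ω G : Type*}

def incrementBlock (ξ : ℕ → Ω → G) (a n : ℕ) (ω : Ω) : Fin n → G :=
  fun k => ξ (a + k) ω

/-- The walk with increments `x 0, …, x (n-1)` is at a new site at time `n`. -/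
def tailSumsNeZero [AddCommMonoid G] (n : ℕ) : Set (Fin n → G) :=
  {x | ∀ l < n, ∑ k : Fin n with l ≤ k.val, x k ≠ 0}

theorem measurableSet_tailSumsNeZero [AddCommMonoid G] [MeasurableSpace G]
    [MeasurableSingletonClass G] [MeasurableAdd₂ G] (n : ℕ) :
    MeasurableSet (tailSumsNeZero (G := G) n) := by
  have : tailSumsNeZero (G := G) n =
      ⋂ l < n, (fun x : Fin n → G => ∑ k : Fin n with l ≤ k.val, x k) ⁻¹' {0}ᶜ := by
    ext x
    simp [tailSumsNeZero]
  rw [this]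
  exact .biInter (Set.to_countable _) fun l _ =>
    (Finset.measurable_sum _ fun k _ => measurable_pi_apply k) (measurableSet_singleton 0).compl

theorem sum_filter_le_fin_eq_sum_Ico {M : Type*} [AddCommMonoid M] (g : ℕ → M) (a l n : ℕ) :
    ∑ k : Fin n with l ≤ k.val, g (a + k) = ∑ k ∈ Ico (a + l) (a + n), g k := by
  rw [sum_filter, Fin.sum_univ_eq_sum_range (fun t => if l ≤ t then g (a + t) else 0),
    ← sum_filter, add_comm a l, add_comm a n, ← sum_Ico_add]
  congr 1
  ext t
  simp only [mem_filter, mem_range, mem_Ico]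
  omega

theorem incrementBlock_mem_tailSumsNeZero_iff [AddCommMonoid G] (ξ : ℕ → Ω → G) (a n : ℕ)
    (ω : Ω) : incrementBlock ξ a n ω ∈ tailSumsNeZero n ↔
      ∀ l < n, ∑ k ∈ Ico (a + l) (a + n), ξ k ω ≠ 0 := by
  simp only [tailSumsNeZero, incrementBlock, Set.mem_ofPred_eq,
    sum_filter_le_fin_eq_sum_Ico (fun k => ξ k ω)]

theorem sum_range_ne_sum_range_iff [AddCommGroup G] {f : ℕ → G} {l n : ℕ} (hln : l ≤ n) :
    ∑ k ∈ range l, f k ≠ ∑ k ∈ range n, f k ↔ ∑ k ∈ Ico l n, f k ≠ 0 := by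
  rw [sum_Ico_eq_sub _ hln, sub_ne_zero, ne_comm]

theorem setOf_forall_sum_range_ne_eq_preimage [AddCommGroup G] (ξ : ℕ → Ω → G) (n : ℕ) :
    {ω | ∀ l < n, ∑ k ∈ range l, ξ k ω ≠ ∑ k ∈ range n, ξ k ω} =
      incrementBlock ξ 0 n ⁻¹' tailSumsNeZero n := by
  ext ω
  simp only [Set.mem_ofPred_eq, Set.mem_preimage, incrementBlock_mem_tailSumsNeZero_iff, zero_add]
  exact forall₂_congr fun l hl => sum_range_ne_sum_range_iff hl.le

theorem setOf_forall_sum_range_ne_subset_preimage [AddCommGroup G] (ξ : ℕ → Ω → G) {a n : ℕ}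
    (han : a ≤ n) :
    {ω | ∀ l < n, ∑ k ∈ range l, ξ k ω ≠ ∑ k ∈ range n, ξ k ω} ⊆
      incrementBlock ξ a (n - a) ⁻¹' tailSumsNeZero (n - a) := by
  intro ω hω
  rw [Set.mem_preimage, incrementBlock_mem_tailSumsNeZero_iff, Nat.add_sub_cancel' han]
  intro l hl
  exact (sum_range_ne_sum_range_iff (by omega)).1 (hω (a + l) (by omega))

namespace ProbabilityTheory

variable [MeasurableSpace Ω] [MeasurableSpace G] {μ : Measure Ω} {ξ : ℕ → Ω → G}

theorem iIndepFun.indepFun_incrementBlock (h : iIndepFun ξ μ) (hξ : ∀ k, Measurable (ξ k))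
    {a n b m : ℕ} (hab : a + n ≤ b) :
    IndepFun (incrementBlock ξ a n) (incrementBlock ξ b m) μ := by
  have hdisj : Disjoint (Ico a (a + n)) (Ico b (b + m)) :=
    Ico_disjoint_Ico_consecutive a (a + n) (b + m) |>.mono_right (Ico_subset_Ico_left hab)
  exact (h.indepFun_finset _ _ hdisj hξ).comp
    (φ := fun y (k : Fin n) => y ⟨a + k, mem_Ico.2 ⟨by omega, by omega⟩⟩)
    (ψ := fun y (k : Fin m) => y ⟨b + k, mem_Ico.2 ⟨by omega, by omega⟩⟩)
    (measurable_pi_lambda _ fun _ => measurable_pi_apply _)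
    (measurable_pi_lambda _ fun _ => measurable_pi_apply _)

theorem iIndepFun.map_incrementBlock {ν : Measure G} (h : iIndepFun ξ μ)
    (hξ : ∀ k, Measurable (ξ k)) (hlaw : ∀ k, μ.map (ξ k) = ν) (a n : ℕ) :
    μ.map (incrementBlock ξ a n) = Measure.pi fun _ => ν := by
  have hinj : Function.Injective fun k : Fin n => a + (k : ℕ) :=
    fun k k' hkk' => Fin.ext (Nat.add_left_cancel hkk')
  change μ.map (fun ω (k : Fin n) => ξ (a + k) ω) = _
  rw [(h.precomp hinj).map_fun_eq_pi_map fun k => (hξ _).aemeasurable]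
  simp only [hlaw]

theorem iIndepFun.identDistrib_incrementBlock {ν : Measure G} (h : iIndepFun ξ μ)
    (hξ : ∀ k, Measurable (ξ k)) (hlaw : ∀ k, μ.map (ξ k) = ν) (a b n : ℕ) :
    IdentDistrib (incrementBlock ξ a n) (incrementBlock ξ b n) μ μ where
  aemeasurable_fst := (measurable_pi_lambda _ fun _ => hξ _).aemeasurable
  aemeasurable_snd := (measurable_pi_lambda _ fun _ => hξ _).aemeasurable
  map_eq := by rw [h.map_incrementBlock hξ hlaw, h.map_incrementBlock hξ hlaw]

end ProbabilityTheory

theorem expectation_psi_product_le_general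
    (d : ℕ)
    (Ω : Type) [MeasureSpace Ω] [IsProbabilityMeasure (ℙ : Measure Ω)]
    (ν : Measure (Fin d → ℤ))
    (ξ : ℕ → Ω → (Fin d → ℤ))
    (hξmeas : ∀ i, Measurable (ξ i))
    (hξindep : iIndepFun ξ ℙ)
    (hξlaw : ∀ i, Measure.map (ξ i) ℙ = ν)
    (Y : ℕ → Ω → (Fin d → ℤ))
    (hY : ∀ n ω, Y n ω = ∑ i ∈ Finset.range n, ξ i ω) :
    ∀ i j : ℕ, i ≤ j →
      (ℙ ({ω | ∀ l, l < i → Y l ω ≠ Y i ω} ∩ {ω | ∀ l, l < j → Y l ω ≠ Y j ω})).toReal ≤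
        (ℙ {ω | ∀ l, l < i → Y l ω ≠ Y i ω}).toReal *
          (ℙ {ω | ∀ l, l < j - i → Y l ω ≠ Y (j - i) ω}).toReal := by
  intro i j hij
  obtain rfl : Y = fun n ω => ∑ k ∈ range n, ξ k ω := funext₂ hY
  rw [← ENNReal.toReal_mul]
  refine ENNReal.toReal_mono (by finiteness) ?_
  rw [setOf_forall_sum_range_ne_eq_preimage ξ i, setOf_forall_sum_range_ne_eq_preimage ξ (j - i)]
  calc _ ≤ ℙ (incrementBlock ξ 0 i ⁻¹' tailSumsNeZero i ∩
        incrementBlock ξ i (j - i) ⁻¹' tailSumsNeZero (j - i)) :=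
        measure_mono (Set.inter_subset_inter_right _
          (setOf_forall_sum_range_ne_subset_preimage ξ hij))
    _ = ℙ (incrementBlock ξ 0 i ⁻¹' tailSumsNeZero i) *
        ℙ (incrementBlock ξ i (j - i) ⁻¹' tailSumsNeZero (j - i)) :=
        (hξindep.indepFun_incrementBlock hξmeas (zero_add i).le).measure_inter_preimage_eq_mul _ _
          (measurableSet_tailSumsNeZero i) (measurableSet_tailSumsNeZero (j - i))
    _ = _ := by
        rw [(hξindep.identDistrib_incrementBlock hξmeas hξlaw i 0 (j - i)).measure_mem_eq
          (measurableSet_tailSumsNeZero (j - i))]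

/-- For the random walk `Y` with i.i.d. increments `ξ`, with
`ψ_k = 1{Y(l) ≠ Y(k) for all 0 ≤ l < k}` the indicator of visiting a new vertex
at time `k`, one has `𝔼[ψ_i ψ_j] ≤ 𝔼[ψ_i] · 𝔼[ψ_{j-i}]` for all `0 ≤ i ≤ j`. -/
theorem expectation_psi_product_le
    (d : ℕ) (hd : 1 ≤ d)
    (Ω : Type) [MeasureSpace Ω] [IsProbabilityMeasure (ℙ : Measure Ω)]
    (ν : Measure (Fin d → ℤ)) [IsProbabilityMeasure ν]
    (ξ : ℕ → Ω → (Fin d → ℤ))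
    (hξmeas : ∀ i, Measurable (ξ i))
    (hξindep : iIndepFun ξ ℙ)
    (hξlaw : ∀ i, Measure.map (ξ i) ℙ = ν)
    (Y : ℕ → Ω → (Fin d → ℤ))
    (hY : ∀ n ω, Y n ω = ∑ i ∈ Finset.range n, ξ i ω) :
    ∀ i j : ℕ, i ≤ j →
      (ℙ ({ω | ∀ l, l < i → Y l ω ≠ Y i ω} ∩ {ω | ∀ l, l < j → Y l ω ≠ Y j ω})).toReal ≤
        (ℙ {ω | ∀ l, l < i → Y l ω ≠ Y i ω}).toReal *
          (ℙ {ω | ∀ l, l < j - i → Y l ω ≠ Y (j - i) ω}).toReal :=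
  expectation_psi_product_le_general d Ω ν ξ hξmeas hξindep hξlaw Y hY
end

section
/- Suppose Assumption (S) holds with 1/ℓ*(n) → γ ∈ (0,1) (transient case), and for k ≥ 1 let R^k(⌊Nt⌋) = {x ∈ ℤ^d : L(x,⌊Nt⌋−1) = k}. Then for every t > 0 and every 0 < c₁ < −log(1−γ) there exist constants C < ∞ and c' > 0 such that for every M ∈ ℕ and all N sufficiently large, ℙ[ ∃ k ≥ M such that |R^k(⌊Nt⌋)| ≥ Nt·e^{−c₁ k} ] ≤ C e^{−c' M}. -/
open MeasureTheory ProbabilityTheory Filter Finset Topology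
open scoped ENNReal

/-!
The successive visits of the walk to a point form a chain of first returns. The increments over
disjoint time blocks are independent and the law of the increment sequence is shift invariant, so
a chain of `m` first returns has probability at most `β ^ m`, where `β = 1 - γ` bounds the
probability of returning at all (the non-return probabilities decrease to `γ`). Charging each point
of `R^k(n)` to its first visit gives `𝔼|R^k(n)| ≤ n β^(k-1)`; Markov's inequality then bounds
`ℙ[|R^k(n)| ≥ N t e^(-c₁ k)]` by `β⁻¹ (e^c₁ β)^k`, which is summable over `k ≥ M` since
`c₁ < -log β`.
-/

section Path

variable {X : Type*} {s : ℕ → X}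

def IsFirstReturn (s : ℕ → X) (p a : ℕ) : Prop :=
  s (p + a) = s p ∧ ∀ l ∈ Ioo 0 a, s (p + l) ≠ s p

def HasReturns (s : ℕ → X) : ℕ → ℕ → ℕ → Prop
  | 0, _, _ => True
  | m + 1, p, len => ∃ a ∈ Icc 1 len, IsFirstReturn s p a ∧ HasReturns s m (p + a) (len - a)

lemma IsFirstReturn.eq {p a b : ℕ} (ha : IsFirstReturn s p a) (hb : IsFirstReturn s p b)
    (ha0 : 0 < a) (hb0 : 0 < b) : a = b := by
  by_contra hne
  rcases lt_or_gt_of_ne hne with h | h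
  · exact hb.2 a (mem_Ioo.2 ⟨ha0, h⟩) ha.1
  · exact ha.2 b (mem_Ioo.2 ⟨hb0, h⟩) hb.1

lemma hasReturns_of_le_card [DecidableEq X] :
    ∀ {m p len : ℕ}, m ≤ #{i ∈ Ioc p (p + len) | s i = s p} → HasReturns s m p len
  | 0, _, _, _ => trivial
  | m + 1, p, len, hm => by
    set T := {i ∈ Ioc p (p + len) | s i = s p}
    have hT : T.Nonempty := card_pos.1 (by omega)
    obtain ⟨hq, hsq⟩ := mem_filter.1 (T.min'_mem hT)
    set q := T.min' hT
    rw [mem_Ioc] at hq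
    have hpq : p + (q - p) = q := by omega
    refine ⟨q - p, mem_Icc.2 ⟨by omega, by omega⟩, ⟨by rw [hpq]; exact hsq, fun l hl hsl => ?_⟩,
      hasReturns_of_le_card ?_⟩
    · rw [mem_Ioo] at hl
      have : q ≤ p + l := T.min'_le _ (mem_filter.2 ⟨mem_Ioc.2 ⟨by omega, by omega⟩, hsl⟩)
      omega
    · have hlater : T.erase q ⊆ {i ∈ Ioc q (q + (len - (q - p))) | s i = s q} := by
        intro i hi
        obtain ⟨hiq, hiT⟩ := mem_erase.1 hi
        obtain ⟨hi, hsi⟩ := mem_filter.1 hiT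
        have := T.min'_le i hiT
        rw [mem_Ioc] at hi
        exact mem_filter.2 ⟨mem_Ioc.2 ⟨by omega, by omega⟩, hsi.trans hsq.symm⟩
      rw [hpq]
      have := card_le_card hlater
      rw [card_erase_of_mem (T.min'_mem hT)] at this
      omega

def levelSet [DecidableEq X] (s : ℕ → X) (k n : ℕ) : Finset X :=
  {x ∈ (range n).image s | #{j ∈ range n | s j = x} = k}

variable [DecidableEq X]

lemma levelSet_zero (n : ℕ) : levelSet s 0 n = ∅ := by
  refine filter_eq_empty_iff.2 fun x hx => ?_
  obtain ⟨j, hj, rfl⟩ := mem_image.1 hx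
  exact (card_pos.2 ⟨j, mem_filter.2 ⟨hj, rfl⟩⟩ : 0 < #{i ∈ range n | s i = s j}).ne'

open scoped Classical in
/-- Each point of a level set is charged to its first visit, from which the walk makes the
remaining visits as a chain of first returns. -/
lemma card_levelSet_succ_le (m n : ℕ) :
    #(levelSet s (m + 1) n) ≤ #{j ∈ range n | HasReturns s m j (n - 1 - j)} := by
  refine card_le_card_of_surjOn s fun x hx => ?_
  obtain ⟨-, hV⟩ := mem_filter.1 hx
  set V := {j ∈ range n | s j = x}
  have hVne : V.Nonempty := card_pos.1 (by omega)
  obtain ⟨hj, hsj⟩ := mem_filter.1 (V.min'_mem hVne)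
  set j := V.min' hVne
  rw [mem_range] at hj
  refine ⟨j, mem_filter.2 ⟨mem_range.2 hj, hasReturns_of_le_card ?_⟩, hsj⟩
  have hlater : V.erase j ⊆ {i ∈ Ioc j (j + (n - 1 - j)) | s i = s j} := by
    intro i hi
    obtain ⟨hij, hiV⟩ := mem_erase.1 hi
    obtain ⟨hi, hsi⟩ := mem_filter.1 hiV
    have := V.min'_le i hiV
    rw [mem_range] at hi
    exact mem_filter.2 ⟨mem_Ioc.2 ⟨by omega, by omega⟩, hsi.trans hsj.symm⟩
  have := card_le_card hlater
  rw [card_erase_of_mem (V.min'_mem hVne)] at this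
  omega

end Path

section Sigma

variable {Ω X : Type*} {mΩ : MeasurableSpace Ω} [MeasurableSpace X] {μ : Measure Ω}
  {ξ : ℕ → Ω → X}

abbrev sigmaOf (ξ : ℕ → Ω → X) (S : Set ℕ) : MeasurableSpace Ω :=
  ⨆ i ∈ S, MeasurableSpace.comap (ξ i) ‹_›

lemma sigmaOf_mono {S T : Set ℕ} (h : S ⊆ T) : sigmaOf ξ S ≤ sigmaOf ξ T :=
  biSup_mono h

lemma sigmaOf_le (hξ : ∀ i, Measurable (ξ i)) (S : Set ℕ) : sigmaOf ξ S ≤ mΩ :=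
  iSup₂_le fun i _ => (hξ i).comap_le

lemma measurable_sigmaOf {S : Set ℕ} {i : ℕ} (hi : i ∈ S) : Measurable[sigmaOf ξ S] (ξ i) :=
  .of_comap_le (le_iSup₂ (f := fun j (_ : j ∈ S) => MeasurableSpace.comap (ξ j) ‹_›) i hi)

lemma measure_inter_eq_mul_of_disjoint (hξ : ∀ i, Measurable (ξ i))
    (hind : iIndepFun ξ μ) {S T : Set ℕ} (hST : Disjoint S T) {A B : Set Ω}
    (hA : MeasurableSet[sigmaOf ξ S] A) (hB : MeasurableSet[sigmaOf ξ T] B) :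
    μ (A ∩ B) = μ A * μ B :=
  (Indep_iff _ _ μ).1 (indep_iSup_of_disjoint (fun i => (hξ i).comap_le) hind.iIndep hST) A B hA hB

lemma map_shift_eq {ν : Measure X} (hξ : ∀ i, Measurable (ξ i)) (hind : iIndepFun ξ μ)
    (hlaw : ∀ i, μ.map (ξ i) = ν) (p : ℕ) :
    μ.map (fun ω i => ξ (p + i) ω) = μ.map (fun ω i => ξ i ω) := by
  rw [(hind.precomp (add_right_injective p)).map_fun_eq_infinitePi_map (fun i => hξ _),
    hind.map_fun_eq_infinitePi_map hξ]
  simp only [hlaw]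

end Sigma

lemma measurableSet_isFirstReturn {Ω X : Type*} {mΩ : MeasurableSpace Ω} [MeasurableSpace X]
    [MeasurableEq X] {s : Ω → ℕ → X} {a : ℕ} (hs : ∀ n ≤ a, Measurable fun ω => s ω n) :
    MeasurableSet {ω | IsFirstReturn (s ω) 0 a} := by
  have hset : {ω | IsFirstReturn (s ω) 0 a}
      = {ω | s ω a = s ω 0} ∩ ⋂ l ∈ Ioo 0 a, {ω | s ω l = s ω 0}ᶜ := by
    ext; simp [IsFirstReturn]
  rw [hset]
  exact (measurableSet_eq_fun (hs a le_rfl) (hs 0 (Nat.zero_le _))).inter <|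
    .biInter (Set.to_countable _) fun l hl => (measurableSet_eq_fun (hs l (mem_Ioo.1 hl).2.le) (hs 0 (Nat.zero_le _))).compl

section Walk

variable {Ω X : Type*} {mΩ : MeasurableSpace Ω} [AddCommGroup X] {ξ : ℕ → Ω → X}

def walk (ξ : ℕ → Ω → X) (ω : Ω) (n : ℕ) : X := ∑ i ∈ range n, ξ i ω

lemma walk_shift (p : ℕ) (ω : Ω) (n : ℕ) :
    walk (fun i => ξ (p + i)) ω n = walk ξ ω (p + n) - walk ξ ω p := by
  simp [walk, sum_range_add]

lemma isFirstReturn_walk_iff {ω : Ω} {p a : ℕ} :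
    IsFirstReturn (walk ξ ω) p a ↔ IsFirstReturn (walk (fun i => ξ (p + i)) ω) 0 a := by
  simp [IsFirstReturn, walk_shift, sub_eq_zero]

lemma setOf_hasReturns_succ (m p len : ℕ) :
    {ω | HasReturns (walk ξ ω) (m + 1) p len} = ⋃ a ∈ Icc 1 len,
      {ω | IsFirstReturn (walk ξ ω) p a} ∩ {ω | HasReturns (walk ξ ω) m (p + a) (len - a)} := by
  ext; simp [HasReturns, and_left_comm]

variable [MeasurableSpace X] [MeasurableEq X] [MeasurableAdd₂ X]

lemma measurableSet_isFirstReturn_walk (p a : ℕ) :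
    MeasurableSet[sigmaOf ξ (Set.Ico p (p + a))] {ω | IsFirstReturn (walk ξ ω) p a} := by
  simp only [isFirstReturn_walk_iff (p := p)]
  refine measurableSet_isFirstReturn (mΩ := sigmaOf ξ _) fun n hn => ?_
  exact Finset.measurable_fun_sum _ fun i hi =>
    measurable_sigmaOf (Set.mem_Ico.2 ⟨by omega, by simp at hi; omega⟩)

lemma measurableSet_hasReturns_walk (m : ℕ) :
    ∀ p len : ℕ,
      MeasurableSet[sigmaOf ξ (Set.Ico p (p + len))] {ω | HasReturns (walk ξ ω) m p len} := by
  induction m with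
  | zero => intro p len; simp [HasReturns]
  | succ m ih =>
    intro p len
    rw [setOf_hasReturns_succ]
    refine .biUnion (Set.to_countable _) fun a ha => .inter ?_ ?_ <;> rw [mem_coe, mem_Icc] at ha
    · exact sigmaOf_mono (Set.Ico_subset_Ico le_rfl (by omega)) _
        (measurableSet_isFirstReturn_walk p a)
    · exact sigmaOf_mono (Set.Ico_subset_Ico (by omega) (by omega)) _ (ih _ _)

end Walk

section Probability

variable {Ω X : Type*} {mΩ : MeasurableSpace Ω} [AddCommGroup X] [MeasurableSpace X]
  [MeasurableEq X] [MeasurableAdd₂ X] {μ : Measure Ω} {ξ : ℕ → Ω → X}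

lemma measure_isFirstReturn_walk {ν : Measure X} (hξ : ∀ i, Measurable (ξ i))
    (hind : iIndepFun ξ μ) (hlaw : ∀ i, μ.map (ξ i) = ν) (p a : ℕ) :
    μ {ω | IsFirstReturn (walk ξ ω) p a} = μ {ω | IsFirstReturn (walk ξ ω) 0 a} := by
  have hE : MeasurableSet {v : ℕ → X | IsFirstReturn (walk (fun i v => v i) v) 0 a} :=
    measurableSet_isFirstReturn fun n _ =>
      Finset.measurable_fun_sum _ fun i _ => measurable_pi_apply i
  have hV : ∀ q, Measurable fun ω i => ξ (q + i) ω := fun q => measurable_pi_lambda _ fun i => hξ _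
  calc μ {ω | IsFirstReturn (walk ξ ω) p a}
      = μ.map (fun ω i => ξ (p + i) ω) {v | IsFirstReturn (walk (fun i v => v i) v) 0 a} := by
        rw [Measure.map_apply (hV p) hE]
        simp only [isFirstReturn_walk_iff (p := p)]
        rfl
    _ = μ {ω | IsFirstReturn (walk ξ ω) 0 a} := by
        rw [map_shift_eq hξ hind hlaw, Measure.map_apply (measurable_pi_lambda _ hξ) hE]
        rfl

lemma measure_hasReturns_walk_le [IsProbabilityMeasure μ] {ν : Measure X}
    (hξ : ∀ i, Measurable (ξ i)) (hind : iIndepFun ξ μ) (hlaw : ∀ i, μ.map (ξ i) = ν)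
    {β : ℝ≥0∞} (hβ : ∀ len, ∑ a ∈ Icc 1 len, μ {ω | IsFirstReturn (walk ξ ω) 0 a} ≤ β) (m : ℕ) :
    ∀ p len, μ {ω | HasReturns (walk ξ ω) m p len} ≤ β ^ m := by
  induction m with
  | zero => intro p len; simpa using prob_le_one
  | succ m ih =>
    intro p len
    calc μ {ω | HasReturns (walk ξ ω) (m + 1) p len}
        ≤ ∑ a ∈ Icc 1 len, μ ({ω | IsFirstReturn (walk ξ ω) p a}
            ∩ {ω | HasReturns (walk ξ ω) m (p + a) (len - a)}) := by
          rw [setOf_hasReturns_succ]; exact measure_biUnion_finset_le _ _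
      _ = ∑ a ∈ Icc 1 len, μ {ω | IsFirstReturn (walk ξ ω) 0 a}
            * μ {ω | HasReturns (walk ξ ω) m (p + a) (len - a)} := by
          refine sum_congr rfl fun a _ => ?_
          rw [measure_inter_eq_mul_of_disjoint hξ hind
            (Set.Ico_disjoint_Ico.2 (by omega))
            (measurableSet_isFirstReturn_walk p a) (measurableSet_hasReturns_walk m _ _),
            measure_isFirstReturn_walk hξ hind hlaw]
      _ ≤ (∑ a ∈ Icc 1 len, μ {ω | IsFirstReturn (walk ξ ω) 0 a}) * β ^ m := by
          rw [sum_mul]; gcongr with a; exact ih _ _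
      _ ≤ β ^ (m + 1) := by rw [pow_succ']; gcongr; exact hβ len

lemma sum_measure_isFirstReturn_walk_le [IsProbabilityMeasure μ] (hξ : ∀ i, Measurable (ξ i))
    (len : ℕ) : ∑ a ∈ Icc 1 len, μ {ω | IsFirstReturn (walk ξ ω) 0 a}
      ≤ 1 - μ {ω | ∀ k, 1 ≤ k → k ≤ len → walk ξ ω k ≠ 0} := by
  set U := ⋃ a ∈ Icc 1 len, {ω | IsFirstReturn (walk ξ ω) 0 a}
  have hmeas : ∀ a, MeasurableSet {ω | IsFirstReturn (walk ξ ω) 0 a} := fun a =>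
    sigmaOf_le hξ _ _ (measurableSet_isFirstReturn_walk 0 a)
  have hdisj : Disjoint {ω | ∀ k, 1 ≤ k → k ≤ len → walk ξ ω k ≠ 0} U := by
    refine Set.disjoint_left.2 fun ω hω hU => ?_
    obtain ⟨a, ha, hret⟩ := Set.mem_iUnion₂.1 hU
    rw [mem_Icc] at ha
    exact hω a ha.1 ha.2 (by simpa [walk] using hret.1)
  rw [← measure_biUnion_finset (f := fun a => {ω | IsFirstReturn (walk ξ ω) 0 a})
    (fun a ha b hb hab => Set.disjoint_left.2 fun ω h h' =>
      hab (IsFirstReturn.eq h h' (mem_Icc.1 ha).1 (mem_Icc.1 hb).1)) fun a _ => hmeas a]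
  refine ENNReal.le_sub_of_add_le_right (measure_ne_top _ _) ?_
  rw [add_comm, ← measure_union hdisj (.biUnion (Set.to_countable _) fun a _ => hmeas a)]
  exact prob_le_one

lemma sum_measure_isFirstReturn_walk_le_of_tendsto [IsProbabilityMeasure μ]
    (hξ : ∀ i, Measurable (ξ i)) {γ : ℝ} (hγ : 0 ≤ γ)
    (hlim : Tendsto (fun n => (μ {ω | ∀ k, 1 ≤ k → k ≤ n → walk ξ ω k ≠ 0}).toReal) atTop (𝓝 γ))
    (len : ℕ) :
    ∑ a ∈ Icc 1 len, μ {ω | IsFirstReturn (walk ξ ω) 0 a} ≤ ENNReal.ofReal (1 - γ) := by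
  have hanti : Antitone fun n => (μ {ω | ∀ k, 1 ≤ k → k ≤ n → walk ξ ω k ≠ 0}).toReal :=
    antitone_nat_of_succ_le fun n => ENNReal.toReal_mono (measure_ne_top _ _)
      (measure_mono fun ω hω k h1 h2 => hω k h1 (h2.trans n.le_succ))
  refine (sum_measure_isFirstReturn_walk_le hξ len).trans ?_
  rw [ENNReal.ofReal_sub _ hγ, ENNReal.ofReal_one]
  exact tsub_le_tsub_left (ENNReal.ofReal_le_of_le_toReal (hanti.le_of_tendsto hlim len)) 1

end Probability

section LevelSets

variable {Ω X : Type*} {mΩ : MeasurableSpace Ω} [AddCommGroup X] [MeasurableSpace X]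
  [MeasurableEq X] [MeasurableAdd₂ X] [DecidableEq X] {μ : Measure Ω} [IsProbabilityMeasure μ]
  {ν : Measure X} {ξ : ℕ → Ω → X}

open scoped Classical in
lemma measure_le_card_levelSet_le (hξ : ∀ i, Measurable (ξ i)) (hind : iIndepFun ξ μ)
    (hlaw : ∀ i, μ.map (ξ i) = ν) {β : ℝ} (hβ0 : 0 ≤ β)
    (hβ : ∀ len, ∑ a ∈ Icc 1 len, μ {ω | IsFirstReturn (walk ξ ω) 0 a} ≤ ENNReal.ofReal β)
    {ε : ℝ} (hε : 0 < ε) (m n : ℕ) :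
    μ {ω | ε ≤ (#(levelSet (walk ξ ω) (m + 1) n) : ℝ)} ≤ ENNReal.ofReal (n * β ^ m / ε) := by
  set E : ℕ → Set Ω := fun j => {ω | HasReturns (walk ξ ω) m j (n - 1 - j)}
  have hE : ∀ j, MeasurableSet (E j) := fun j =>
    sigmaOf_le hξ _ _ (measurableSet_hasReturns_walk m _ _)
  have hcount : ∀ ω, ENNReal.ofReal (#(levelSet (walk ξ ω) (m + 1) n) : ℝ)
      ≤ ∑ j ∈ range n, (E j).indicator 1 ω := by
    intro ω
    rw [ENNReal.ofReal_natCast]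
    calc (#(levelSet (walk ξ ω) (m + 1) n) : ℝ≥0∞) ≤ #{j ∈ range n | ω ∈ E j} := by
          exact_mod_cast card_levelSet_succ_le m n
      _ = ∑ j ∈ range n, (E j).indicator 1 ω := by simp [Set.indicator_apply]
  calc μ {ω | ε ≤ (#(levelSet (walk ξ ω) (m + 1) n) : ℝ)}
      ≤ μ {ω | ENNReal.ofReal ε ≤ ∑ j ∈ range n, (E j).indicator 1 ω} :=
        measure_mono fun ω hω => (ENNReal.ofReal_le_ofReal hω).trans (hcount ω)
    _ ≤ (∫⁻ ω, ∑ j ∈ range n, (E j).indicator 1 ω ∂μ) / ENNReal.ofReal ε :=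
        meas_ge_le_lintegral_div
          (Finset.measurable_sum _ fun j _ => measurable_one.indicator (hE j)).aemeasurable
          (ENNReal.ofReal_pos.2 hε).ne' ENNReal.ofReal_ne_top
    _ = (∑ j ∈ range n, μ (E j)) / ENNReal.ofReal ε := by
        rw [lintegral_finsetSum (f := fun j => (E j).indicator 1) _
          fun j _ => measurable_one.indicator (hE j)]
        simp only [lintegral_indicator_one (hE _)]
    _ ≤ (n * ENNReal.ofReal β ^ m) / ENNReal.ofReal ε := by
        gcongr
        simpa using sum_le_card_nsmul (range n) (fun j => μ (E j)) _
          fun j _ => measure_hasReturns_walk_le hξ hind hlaw hβ m _ _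
    _ = ENNReal.ofReal (n * β ^ m / ε) := by
        rw [ENNReal.ofReal_div_of_pos hε, ENNReal.ofReal_mul (by positivity),
          ENNReal.ofReal_pow hβ0, ENNReal.ofReal_natCast]

lemma measure_card_levelSet_ge_le (hξ : ∀ i, Measurable (ξ i)) (hind : iIndepFun ξ μ)
    (hlaw : ∀ i, μ.map (ξ i) = ν) {β : ℝ} (hβ0 : 0 < β)
    (hβ : ∀ len, ∑ a ∈ Icc 1 len, μ {ω | IsFirstReturn (walk ξ ω) 0 a} ≤ ENNReal.ofReal β)
    {T : ℝ} (hT : 0 < T) {n : ℕ} (hn : (n : ℝ) ≤ T) (c : ℝ) (k : ℕ) :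
    μ {ω | T * Real.exp (-c * k) ≤ (#(levelSet (walk ξ ω) k n) : ℝ)}
      ≤ ENNReal.ofReal (β⁻¹ * (Real.exp c * β) ^ k) := by
  cases k with
  | zero => simp [levelSet_zero, hT.not_ge]
  | succ m =>
    refine (measure_le_card_levelSet_le hξ hind hlaw hβ0.le hβ (by positivity) m n).trans
      (ENNReal.ofReal_le_ofReal ?_)
    calc n * β ^ m / (T * Real.exp (-c * (m + 1 : ℕ)))
        ≤ T * β ^ m / (T * Real.exp (-c * (m + 1 : ℕ))) := by gcongr
      _ = β⁻¹ * (Real.exp c * β) ^ (m + 1) := by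
        rw [mul_pow, ← Real.exp_nat_mul, neg_mul, Real.exp_neg]
        field_simp
        ring

end LevelSets

lemma toReal_measure_exists_ge_le_of_geometric {Ω : Type*} {mΩ : MeasurableSpace Ω}
    {μ : Measure Ω} {A : ℕ → Set Ω} {C ρ : ℝ} (hC : 0 ≤ C) (hρ0 : 0 ≤ ρ) (hρ1 : ρ < 1)
    (hA : ∀ k, μ (A k) ≤ ENNReal.ofReal (C * ρ ^ k)) (M : ℕ) :
    (μ {ω | ∃ k, M ≤ k ∧ ω ∈ A k}).toReal ≤ C * (1 - ρ)⁻¹ * ρ ^ M := by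
  have hsum := (hasSum_geometric_of_lt_one hρ0 hρ1).mul_left (C * ρ ^ M)
  refine ENNReal.toReal_le_of_le_ofReal (by have := sub_pos.2 hρ1; positivity) ?_
  calc μ {ω | ∃ k, M ≤ k ∧ ω ∈ A k} ≤ μ (⋃ k, A (M + k)) := measure_mono fun ω ⟨k, hk, hω⟩ =>
        Set.mem_iUnion.2 ⟨k - M, by rwa [Nat.add_sub_cancel' hk]⟩
    _ ≤ ∑' k, ENNReal.ofReal (C * ρ ^ M * ρ ^ k) := (measure_iUnion_le _).trans <|
        ENNReal.tsum_le_tsum fun k => by rw [mul_assoc, ← pow_add]; exact hA _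
    _ = ENNReal.ofReal (C * (1 - ρ)⁻¹ * ρ ^ M) := by
        rw [← ENNReal.ofReal_tsum_of_nonneg (fun k => by positivity) hsum.summable, hsum.tsum_eq,
          mul_right_comm]

theorem exponential_bound_level_sets_general
    (d : ℕ)
    (Ω : Type) [MeasureSpace Ω] [IsProbabilityMeasure (ℙ : Measure Ω)]
    (ν : Measure (Fin d → ℤ))
    (ξ : ℕ → Ω → (Fin d → ℤ))
    (hξmeas : ∀ i, Measurable (ξ i))
    (hξindep : iIndepFun ξ ℙ)
    (hξlaw : ∀ i, Measure.map (ξ i) ℙ = ν)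
    (Y : ℕ → Ω → (Fin d → ℤ))
    (hY : ∀ n ω, Y n ω = ∑ i ∈ Finset.range n, ξ i ω)
    (L : (Fin d → ℤ) → ℕ → Ω → ℕ)
    (hL : ∀ x n ω, L x n ω = ((Finset.range (n + 1)).filter (fun j => Y j ω = x)).card)
    (r : ℕ → ℝ)
    (hr : ∀ n, r n = (ℙ {ω | ∀ k, 1 ≤ k → k ≤ n → Y k ω ≠ 0}).toReal)
    -- Assumption (S)
    (ℓs : ℕ → ℝ)
    (hrℓ : ∀ n, r n = 1 / ℓs n)
    -- transient case
    (γ : ℝ) (hγ0 : 0 < γ) (hγ1 : γ < 1)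
    (htrans : Tendsto (fun n : ℕ => 1 / ℓs n) atTop (𝓝 γ))
    -- the sets R^k(⌊Nt⌋)
    (Rk : ℕ → ℕ → Ω → Finset (Fin d → ℤ))
    (hRk : ∀ k n ω, Rk k n ω = ((Finset.range n).image (fun j => Y j ω)).filter
      (fun x => L x (n - 1) ω = k)) :
    ∀ t c₁ : ℝ, 0 < t → 0 < c₁ → c₁ < -Real.log (1 - γ) →
      ∃ C c' : ℝ, 0 < C ∧ 0 < c' ∧ ∀ M : ℕ, ∀ᶠ N : ℕ in atTop,
        (ℙ {ω | ∃ k : ℕ, M ≤ k ∧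
            (N : ℝ) * t * Real.exp (-c₁ * k) ≤ ((Rk k ⌊(N : ℝ) * t⌋₊ ω).card : ℝ)}).toReal
          ≤ C * Real.exp (-c' * M) := by
  intro t c₁ ht hc₁ hc₁'
  obtain rfl : Y = fun n ω => walk ξ ω n := funext₂ hY
  have hβ : 0 < 1 - γ := sub_pos.2 hγ1
  have hret := sum_measure_isFirstReturn_walk_le_of_tendsto hξmeas hγ0.le
    (by simpa only [← hrℓ, hr] using htrans)
  set ρ := Real.exp c₁ * (1 - γ)
  have hρ1 : ρ < 1 := by
    change Real.exp c₁ * (1 - γ) < 1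
    rw [← Real.exp_log hβ, ← Real.exp_add]
    exact Real.exp_lt_one_iff.2 (by linarith)
  refine ⟨(1 - γ)⁻¹ * (1 - ρ)⁻¹, -Real.log ρ, by have := sub_pos.2 hρ1; positivity,
    neg_pos.2 (Real.log_neg (by positivity) hρ1), fun M => ?_⟩
  filter_upwards [(tendsto_natCast_atTop_atTop.atTop_mul_const ht).eventually_ge_atTop 1]
    with N hN
  have hn : 1 ≤ ⌊(N : ℝ) * t⌋₊ := Nat.le_floor (by exact_mod_cast hN)
  have hlevel : ∀ k ω, Rk k ⌊(N : ℝ) * t⌋₊ ω = levelSet (walk ξ ω) k ⌊(N : ℝ) * t⌋₊ :=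
    fun k ω => by
      rw [hRk, levelSet]
      exact filter_congr fun x _ => by rw [hL, Nat.sub_add_cancel hn]
  have hexp : Real.exp (-(-Real.log ρ) * M) = ρ ^ M := by
    rw [neg_neg, mul_comm, Real.exp_nat_mul, Real.exp_log (by positivity)]
  simp only [hlevel, hexp]
  exact toReal_measure_exists_ge_le_of_geometric (by positivity) (by positivity) hρ1
    (measure_card_levelSet_ge_le hξmeas hξindep hξlaw hβ hret (by positivity)
      (Nat.floor_le (by positivity)) c₁) M

/-- under Assumption (S) with `1/ℓ*(n) → γ ∈ (0,1)` (transient case),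
for every `t > 0` and `0 < c₁ < −log(1−γ)` there are `C < ∞` and `c' > 0` such that
for every `M` and all `N` large enough,
`ℙ[∃ k ≥ M, |R^k(⌊Nt⌋)| ≥ Nt e^{−c₁k}] ≤ C e^{−c'M}`. -/
theorem exponential_bound_level_sets
    (d : ℕ) (hd : 1 ≤ d)
    (Ω : Type) [MeasureSpace Ω] [IsProbabilityMeasure (ℙ : Measure Ω)]
    (ν : Measure (Fin d → ℤ)) [IsProbabilityMeasure ν]
    (hν : ν ≠ Measure.dirac 0)
    (ξ : ℕ → Ω → (Fin d → ℤ))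
    (hξmeas : ∀ i, Measurable (ξ i))
    (hξindep : iIndepFun ξ ℙ)
    (hξlaw : ∀ i, Measure.map (ξ i) ℙ = ν)
    (Y : ℕ → Ω → (Fin d → ℤ))
    (hY : ∀ n ω, Y n ω = ∑ i ∈ Finset.range n, ξ i ω)
    (L : (Fin d → ℤ) → ℕ → Ω → ℕ)
    (hL : ∀ x n ω, L x n ω = ((Finset.range (n + 1)).filter (fun j => Y j ω = x)).card)
    (r : ℕ → ℝ)
    (hr : ∀ n, r n = (ℙ {ω | ∀ k, 1 ≤ k → k ≤ n → Y k ω ≠ 0}).toReal)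
    -- Assumption (S)
    (ℓs : ℕ → ℝ) (hℓ1 : ∀ n, 1 ≤ ℓs n)
    (hslow : ∀ c : ℝ, 0 < c →
      Tendsto (fun n : ℕ => ℓs ⌊c * n⌋₊ / ℓs n) atTop (𝓝 1))
    (hrℓ : ∀ n, r n = 1 / ℓs n)
    -- transient case
    (γ : ℝ) (hγ0 : 0 < γ) (hγ1 : γ < 1)
    (htrans : Tendsto (fun n : ℕ => 1 / ℓs n) atTop (𝓝 γ))
    -- the sets R^k(⌊Nt⌋)
    (Rk : ℕ → ℕ → Ω → Finset (Fin d → ℤ))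
    (hRk : ∀ k n ω, Rk k n ω = ((Finset.range n).image (fun j => Y j ω)).filter
      (fun x => L x (n - 1) ω = k)) :
    ∀ t c₁ : ℝ, 0 < t → 0 < c₁ → c₁ < -Real.log (1 - γ) →
      ∃ C c' : ℝ, 0 < C ∧ 0 < c' ∧ ∀ M : ℕ, ∀ᶠ N : ℕ in atTop,
        (ℙ {ω | ∃ k : ℕ, M ≤ k ∧
            (N : ℝ) * t * Real.exp (-c₁ * k) ≤ ((Rk k ⌊(N : ℝ) * t⌋₊ ω).card : ℝ)}).toReal
          ≤ C * Real.exp (-c' * M) :=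
  exponential_bound_level_sets_general d Ω ν ξ hξmeas hξindep hξlaw Y hY L hL r hr ℓs hrℓ γ hγ0 hγ1
    htrans Rk hRk
end
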